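/- Duality of cb norms on the block-multilinear subspace: for a partition P of [n] into t parts and p ∈ V_P, the dual cb-norm with respect to V_P satisfies ‖p‖_{cb,*} = t! · ‖T_p‖_{cb,*}, where T_p is the unique symmetric t-tensor representing p and ‖T_p‖_{cb,*} is the dual of the tensor cb norm on the full tensor space. -/

import Mathlib

/-!
Write `S = T_p`. Comparing coefficients, `⟨p, tensorPoly T⟩ = t! ⟨S, T⟩` for every tensor `T`:
the coefficient of `p` at the monomial of an index tuple `i` is the sum of `S` over the
reorderings of `i`, which number `t!` when `i` meets every block once, and `S` vanishes on all
other tuples because `p ∈ V_P`. Taking the infimum over representatives of `q` gives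
`⟨p, q⟩ ≤ t! ‖S‖_{cb,*} ‖q‖_cb`. Conversely, restricting a tensor `T` to the tuples meeting every
block once does not change `⟨S, T⟩`, lands in `V_P`, and does not increase the cb norm: the
restriction is the average over block signs `ε` of `T` with `x_j` replaced by `ε_{π j} x_j`,
weighted by `∏ ε`. Both sets are bounded because a coefficient of a multilinear polynomial is an
average of its values on `{±1}ⁿ`, which the cb norm of any representative dominates.
-/

open MvPolynomial

noncomputable section

/-- `d × d` real matrices, viewed as operators on Euclidean space (with operator norm). -/
abbrev Mat (d : ℕ) := EuclideanSpace ℝ (Fin d) →L[ℝ] EuclideanSpace ℝ (Fin d)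

/-- Evaluation of a `t`-tensor as a degree-`t` form: `T(x) = ∑_i T_i x_{i₁}⋯x_{i_t}`. -/
def tEval {n t : ℕ} (T : (Fin t → Fin n) → ℝ) (x : Fin n → ℝ) : ℝ :=
  ∑ i : Fin t → Fin n, T i * ∏ s, x (i s)

/-- Permutation action on tensors: `(T∘σ)_i = T_{σ(i)}`. -/
def permT {n t : ℕ} (T : (Fin t → Fin n) → ℝ) (σ : Equiv.Perm (Fin t)) :
    (Fin t → Fin n) → ℝ :=
  fun i => T (i ∘ σ)

/-- The completely bounded norm of a `t`-tensor (single contraction-valued map). -/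
def cbNormT {n t : ℕ} (T : (Fin t → Fin n) → ℝ) : ℝ :=
  sSup {c : ℝ | ∃ (d : ℕ) (A : Fin n → Mat d),
    (∀ j, ‖A j‖ ≤ 1) ∧
    c = ‖∑ i : Fin t → Fin n, T i • (List.ofFn fun s => A (i s)).prod‖}

/-- The completely bounded norm of a degree-`t` form:
`‖p‖_cb = inf { ‖T‖_cb : T(x) = p(x) ∀ x }`. -/
def polyCb (n t : ℕ) (p : MvPolynomial (Fin n) ℝ) : ℝ :=
  sInf {c : ℝ | ∃ T : (Fin t → Fin n) → ℝ,
    (∀ x : Fin n → ℝ, tEval T x = eval x p) ∧ c = cbNormT T}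

/-- The coefficient-wise inner product of two polynomials. -/
def pInner {n : ℕ} (p q : MvPolynomial (Fin n) ℝ) : ℝ :=
  ∑ α ∈ p.support, p.coeff α * q.coeff α

/-- Membership in `V_P`, the span of the block-multilinear monomials
`x_{i₁}⋯x_{i_t}` with exactly one variable from each block of the partition
(given by `π : Fin n → Fin t`, whose fibers are the blocks). -/
def memV {n t : ℕ} (π : Fin n → Fin t) (p : MvPolynomial (Fin n) ℝ) : Prop :=
  ∀ α ∈ p.support, (∀ i, α i ≤ 1) ∧
    ∀ s : Fin t, ∑ i ∈ Finset.univ.filter (fun i => π i = s), α i = 1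

open Finset

variable {n t : ℕ}

def tupleExp (i : Fin t → Fin n) : Fin n →₀ ℕ := ∑ s, Finsupp.single (i s) 1

lemma tupleExp_apply (i : Fin t → Fin n) (j : Fin n) : tupleExp i j = #{s | i s = j} := by
  rw [tupleExp, Finsupp.finsetSum_apply, card_filter]
  simp only [Finsupp.single_apply]

lemma exists_perm_comp_eq_of_card_fiber_eq {α β : Type*} [Fintype α] [DecidableEq β]
    {f g : α → β} (h : ∀ b, #{a | f a = b} = #{a | g a = b}) :
    ∃ σ : Equiv.Perm α, g = f ∘ σ := by
  have e : ∀ b, {a // g a = b} ≃ {a // f a = b} := fun b =>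
    Fintype.equivOfCardEq (by simp only [Fintype.card_subtype, h])
  refine ⟨(Equiv.sigmaFiberEquiv g).symm.trans
    ((Equiv.sigmaCongrRight e).trans (Equiv.sigmaFiberEquiv f)), funext fun a => ?_⟩
  exact ((e (g a) ⟨a, rfl⟩).2).symm

lemma exists_perm_of_tupleExp_eq {i i' : Fin t → Fin n} (h : tupleExp i = tupleExp i') :
    ∃ σ : Equiv.Perm (Fin t), i' = i ∘ σ :=
  exists_perm_comp_eq_of_card_fiber_eq fun j => by rw [← tupleExp_apply, h, tupleExp_apply]

lemma tupleExp_comp_perm (i : Fin t → Fin n) (σ : Equiv.Perm (Fin t)) :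
    tupleExp (i ∘ σ) = tupleExp i := by
  simp only [tupleExp, Function.comp_apply]
  exact Equiv.sum_comp σ fun s => Finsupp.single (i s) 1

lemma card_tupleExp_fiber {i : Fin t → Fin n} (hi : Function.Injective i) :
    #{i' : Fin t → Fin n | tupleExp i' = tupleExp i} = t.factorial := by
  have hfiber : ({i' | tupleExp i' = tupleExp i} : Finset (Fin t → Fin n)) =
      univ.image fun σ : Equiv.Perm (Fin t) => i ∘ σ := by
    ext i'
    simp only [mem_filter, mem_univ, true_and, mem_image]
    constructor
    · intro h
      obtain ⟨σ, rfl⟩ := exists_perm_of_tupleExp_eq h.symm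
      exact ⟨σ, rfl⟩
    · rintro ⟨σ, rfl⟩
      exact tupleExp_comp_perm i σ
  have hinj : Function.Injective fun σ : Equiv.Perm (Fin t) => i ∘ σ :=
    fun σ τ h => Equiv.ext fun s => hi (congrFun h s)
  rw [hfiber, card_image_of_injective _ hinj, card_univ, Fintype.card_perm, Fintype.card_fin]

lemma exists_tupleExp_eq (α : Fin n →₀ ℕ) (h : ∑ j, α j = t) :
    ∃ i : Fin t → Fin n, tupleExp i = α := by
  let e : Fin t ≃ Σ j, Fin (α j) := Fintype.equivOfCardEq (by simp [h])
  refine ⟨fun s => (e s).1, Finsupp.ext fun j => ?_⟩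
  rw [tupleExp_apply, ← Fintype.card_subtype]
  exact (Fintype.card_congr ((e.subtypeEquiv fun _ => Iff.rfl).trans (Equiv.sigmaSubtype j))).trans
    (Fintype.card_fin _)

variable (n t) in
def tensorPoly : ((Fin t → Fin n) → ℝ) →ₗ[ℝ] MvPolynomial (Fin n) ℝ :=
  Fintype.linearCombination ℝ fun i => monomial (tupleExp i) 1

lemma tensorPoly_apply (T : (Fin t → Fin n) → ℝ) :
    tensorPoly n t T = ∑ i, monomial (tupleExp i) (T i) := by
  simp [tensorPoly, Fintype.linearCombination_apply, smul_monomial]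

lemma eval_tensorPoly (T : (Fin t → Fin n) → ℝ) (x : Fin n → ℝ) :
    eval x (tensorPoly n t T) = tEval T x := by
  simp [tensorPoly, Fintype.linearCombination_apply, tEval, tupleExp, monomial_sum_one,
    ← X.eq_1]

lemma coeff_tensorPoly (T : (Fin t → Fin n) → ℝ) (α : Fin n →₀ ℕ) :
    coeff α (tensorPoly n t T) = ∑ i with tupleExp i = α, T i := by
  simp [tensorPoly_apply, coeff_sum, coeff_monomial, sum_filter]

lemma tEval_eq_eval_iff {T : (Fin t → Fin n) → ℝ} {q : MvPolynomial (Fin n) ℝ} :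
    (∀ x, tEval T x = eval x q) ↔ tensorPoly n t T = q := by
  simp only [← eval_tensorPoly]
  exact ⟨MvPolynomial.funext, fun h x => by rw [h]⟩

lemma exists_tensorPoly_eq {q : MvPolynomial (Fin n) ℝ} (hq : ∀ α ∈ q.support, ∑ j, α j = t) :
    ∃ T, tensorPoly n t T = q := by
  rw [← LinearMap.mem_range, tensorPoly, Fintype.range_linearCombination, q.as_sum]
  refine Submodule.sum_mem _ fun α hα => ?_
  obtain ⟨i, rfl⟩ := exists_tupleExp_eq α (hq α hα)
  rw [← mul_one (coeff _ q), ← smul_eq_mul, ← smul_monomial]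
  exact Submodule.smul_mem _ _ (Submodule.subset_span ⟨i, rfl⟩)

lemma pInner_tensorPoly (p : MvPolynomial (Fin n) ℝ) (T : (Fin t → Fin n) → ℝ) :
    pInner p (tensorPoly n t T) = ∑ i, coeff (tupleExp i) p * T i := by
  simp only [pInner, tensorPoly_apply, coeff_sum, coeff_monomial, mul_sum, mul_ite, mul_zero]
  rw [sum_comm]
  refine sum_congr rfl fun i _ => ?_
  rw [sum_ite_eq]
  split_ifs with h
  · rfl
  · rw [notMem_support_iff.1 h, zero_mul]

def IsTransversal (π : Fin n → Fin t) (i : Fin t → Fin n) : Prop :=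
  ∀ s, #{s' | π (i s') = s} = 1

instance (π : Fin n → Fin t) : DecidablePred (IsTransversal π) :=
  fun i => by unfold IsTransversal; infer_instance

lemma IsTransversal.injective {π : Fin n → Fin t} {i : Fin t → Fin n} (h : IsTransversal π i) :
    Function.Injective i := by
  intro s₁ s₂ hs
  obtain ⟨a, ha⟩ := card_eq_one.1 (h (π (i s₁)))
  have h₁ : s₁ ∈ ({s' | π (i s') = π (i s₁)} : Finset (Fin t)) := by simp
  have h₂ : s₂ ∈ ({s' | π (i s') = π (i s₁)} : Finset (Fin t)) := by simp [hs]
  rw [ha, mem_singleton] at h₁ h₂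
  rw [h₁, h₂]

lemma isTransversal_iff_forall_odd (π : Fin n → Fin t) (i : Fin t → Fin n) :
    IsTransversal π i ↔ ∀ s, Odd #{s' | π (i s') = s} := by
  refine ⟨fun h s => by rw [h s]; exact odd_one, fun h s => ?_⟩
  have htotal : ∑ s, #{s' | π (i s') = s} = ∑ _s : Fin t, 1 := by
    rw [← card_eq_sum_card_fiberwise fun _ _ => mem_univ _]
    simp
  exact (sum_eq_sum_iff_of_le fun s _ => (h s).pos).1 htotal.symm s (mem_univ s) |>.symm

lemma sum_block_tupleExp (π : Fin n → Fin t) (i : Fin t → Fin n) (s : Fin t) :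
    ∑ j with π j = s, tupleExp i j = #{s' | π (i s') = s} := by
  simp only [tupleExp_apply]
  rw [card_eq_sum_card_fiberwise (f := i) (t := {j | π j = s}) fun s' hs' => by simpa using hs']
  refine sum_congr rfl fun j hj => ?_
  rw [mem_filter] at hj
  congr 1
  ext s'
  simp only [mem_filter, mem_univ, true_and]
  exact ⟨fun h => ⟨h ▸ hj.2, h⟩, And.right⟩

lemma IsTransversal.of_mem_support {π : Fin n → Fin t} {q : MvPolynomial (Fin n) ℝ}
    (hq : memV π q) {i : Fin t → Fin n} (hi : tupleExp i ∈ q.support) : IsTransversal π i :=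
  fun s => by rw [← sum_block_tupleExp]; exact (hq _ hi).2 s

lemma sum_eq_of_memV {π : Fin n → Fin t} {q : MvPolynomial (Fin n) ℝ} (hq : memV π q)
    {α : Fin n →₀ ℕ} (hα : α ∈ q.support) : ∑ j, α j = t := by
  rw [← sum_fiberwise univ π, sum_congr rfl fun s _ => (hq α hα).2 s]
  simp

lemma memV_tensorPoly {π : Fin n → Fin t} {T : (Fin t → Fin n) → ℝ}
    (hT : ∀ i, T i ≠ 0 → IsTransversal π i) : memV π (tensorPoly n t T) := by
  intro α hα
  rw [mem_support_iff, coeff_tensorPoly] at hα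
  obtain ⟨i, hi, hTi⟩ := exists_ne_zero_of_sum_ne_zero hα
  obtain rfl := (mem_filter.1 hi).2
  refine ⟨fun j => ?_, fun s => by rw [sum_block_tupleExp]; exact hT i hTi s⟩
  rw [tupleExp_apply]
  exact card_le_one.2 fun a ha b hb =>
    (hT i hTi).injective ((mem_filter.1 ha).2.trans (mem_filter.1 hb).2.symm)

section SymmetricRepresentative

variable {π : Fin n → Fin t} {p : MvPolynomial (Fin n) ℝ} {S : (Fin t → Fin n) → ℝ}

lemma coeff_tupleExp_eq_factorial_mul (hp : memV π p) (hsym : ∀ σ, permT S σ = S)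
    (hrep : tensorPoly n t S = p) (i : Fin t → Fin n) :
    coeff (tupleExp i) p = t.factorial * S i := by
  have horbit : coeff (tupleExp i) p = #{i' : Fin t → Fin n | tupleExp i' = tupleExp i} * S i := by
    rw [← hrep, coeff_tensorPoly, ← nsmul_eq_mul, ← sum_const]
    refine sum_congr rfl fun i' hi' => ?_
    obtain ⟨σ, rfl⟩ := exists_perm_of_tupleExp_eq (mem_filter.1 hi').2.symm
    exact congrFun (hsym σ) i
  by_cases hi : tupleExp i ∈ p.support
  · rw [horbit, card_tupleExp_fiber (IsTransversal.of_mem_support hp hi).injective]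
  · have hcard : (#{i' : Fin t → Fin n | tupleExp i' = tupleExp i} : ℝ) ≠ 0 :=
      Nat.cast_ne_zero.2 (card_ne_zero_of_mem (by simp : i ∈ _))
    have hS : S i = 0 := by
      rw [notMem_support_iff.1 hi, eq_comm, mul_eq_zero] at horbit
      exact horbit.resolve_left hcard
    rw [notMem_support_iff.1 hi, hS, mul_zero]

lemma pInner_tensorPoly_eq_factorial_mul (hp : memV π p) (hsym : ∀ σ, permT S σ = S)
    (hrep : tensorPoly n t S = p) (T : (Fin t → Fin n) → ℝ) :
    pInner p (tensorPoly n t T) = t.factorial * ∑ i, S i * T i := by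
  rw [pInner_tensorPoly, mul_sum]
  refine sum_congr rfl fun i _ => ?_
  rw [coeff_tupleExp_eq_factorial_mul hp hsym hrep, mul_assoc]

lemma eq_zero_of_not_isTransversal (hp : memV π p) (hsym : ∀ σ, permT S σ = S)
    (hrep : tensorPoly n t S = p) {i : Fin t → Fin n} (hi : ¬ IsTransversal π i) : S i = 0 := by
  have hcoeff : coeff (tupleExp i) p = 0 :=
    notMem_support_iff.1 fun h => hi (IsTransversal.of_mem_support hp h)
  rw [coeff_tupleExp_eq_factorial_mul hp hsym hrep] at hcoeff
  exact (mul_eq_zero.1 hcoeff).resolve_left (Nat.cast_ne_zero.2 t.factorial_ne_zero)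

end SymmetricRepresentative

lemma List.prod_ofFn_smul {A : Type*} [Ring A] [Algebra ℝ A] :
    ∀ {t : ℕ} (c : Fin t → ℝ) (B : Fin t → A),
      (List.ofFn fun s => c s • B s).prod = (∏ s, c s) • (List.ofFn B).prod
  | 0, _, _ => by simp
  | t + 1, c, B => by
    rw [List.ofFn_succ, List.ofFn_succ, List.prod_cons, List.prod_cons,
      List.prod_ofFn_smul (fun s => c s.succ) (fun s => B s.succ), Fin.prod_univ_succ,
      smul_mul_smul]

lemma norm_list_prod_le_one {d : ℕ} (l : List (Mat d)) (h : ∀ A ∈ l, ‖A‖ ≤ 1) :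
    ‖l.prod‖ ≤ 1 := by
  induction l with
  | nil => exact ContinuousLinearMap.norm_id_le
  | cons A l ih =>
    rw [List.prod_cons]
    exact (norm_mul_le _ _).trans (mul_le_one₀ (h A (by simp)) (norm_nonneg _)
      (ih fun B hB => h B (by simp [hB])))

section CbNorm

variable {T T' : (Fin t → Fin n) → ℝ}

def tensorOp {d : ℕ} (A : Fin n → Mat d) : ((Fin t → Fin n) → ℝ) →ₗ[ℝ] Mat d :=
  Fintype.linearCombination ℝ fun i => (List.ofFn fun s => A (i s)).prod

lemma tensorOp_apply {d : ℕ} (A : Fin n → Mat d) (T : (Fin t → Fin n) → ℝ) :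
    tensorOp A T = ∑ i, T i • (List.ofFn fun s => A (i s)).prod :=
  Fintype.linearCombination_apply _ _ _

lemma norm_tensorOp_le {d : ℕ} {A : Fin n → Mat d} (hA : ∀ j, ‖A j‖ ≤ 1) :
    ‖tensorOp A T‖ ≤ ∑ i, |T i| := by
  rw [tensorOp_apply]
  refine (norm_sum_le _ _).trans (sum_le_sum fun i _ => ?_)
  rw [norm_smul, Real.norm_eq_abs]
  exact mul_le_of_le_one_right (abs_nonneg _)
    (norm_list_prod_le_one _ fun B hB => by obtain ⟨s, rfl⟩ := List.mem_ofFn.1 hB; exact hA _)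

lemma le_cbNormT {d : ℕ} {A : Fin n → Mat d} (hA : ∀ j, ‖A j‖ ≤ 1) :
    ‖tensorOp A T‖ ≤ cbNormT T := by
  refine le_csSup ⟨∑ i, |T i|, ?_⟩ ⟨d, A, hA, by rw [tensorOp_apply]⟩
  rintro _ ⟨d, A, hA, rfl⟩
  rw [← tensorOp_apply]
  exact norm_tensorOp_le hA

lemma cbNormT_le {c : ℝ}
    (h : ∀ (d : ℕ) (A : Fin n → Mat d), (∀ j, ‖A j‖ ≤ 1) → ‖tensorOp A T‖ ≤ c) :
    cbNormT T ≤ c := by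
  refine csSup_le ⟨_, 0, 0, fun _ => by simp, rfl⟩ ?_
  rintro _ ⟨d, A, hA, rfl⟩
  rw [← tensorOp_apply]
  exact h d A hA

lemma cbNormT_nonneg (T : (Fin t → Fin n) → ℝ) : 0 ≤ cbNormT T :=
  (norm_nonneg _).trans (le_cbNormT (A := (0 : Fin n → Mat 0)) fun _ => by simp)

lemma cbNormT_zero : cbNormT (0 : (Fin t → Fin n) → ℝ) = 0 :=
  (cbNormT_le fun _ _ _ => by simp).antisymm (cbNormT_nonneg 0)

lemma cbNormT_add_le : cbNormT (T + T') ≤ cbNormT T + cbNormT T' :=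
  cbNormT_le fun _ _ hA => by
    rw [map_add]
    exact (norm_add_le _ _).trans (add_le_add (le_cbNormT hA) (le_cbNormT hA))

lemma cbNormT_smul_le (c : ℝ) : cbNormT (c • T) ≤ |c| * cbNormT T :=
  cbNormT_le fun _ _ hA => by
    rw [map_smul, norm_smul, Real.norm_eq_abs]
    exact mul_le_mul_of_nonneg_left (le_cbNormT hA) (abs_nonneg c)

lemma cbNormT_sum_le {κ : Type*} (s : Finset κ) (T : κ → (Fin t → Fin n) → ℝ) :
    cbNormT (∑ k ∈ s, T k) ≤ ∑ k ∈ s, cbNormT (T k) :=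
  le_sum_of_subadditive _ cbNormT_zero.le (fun _ _ => cbNormT_add_le) s T

lemma cbNormT_mul_prod_le (T : (Fin t → Fin n) → ℝ) {u : Fin n → ℝ} (hu : ∀ j, |u j| ≤ 1) :
    cbNormT (fun i => (∏ s, u (i s)) * T i) ≤ cbNormT T :=
  cbNormT_le fun _ A hA => by
    have hA' : ∀ j, ‖u j • A j‖ ≤ 1 := fun j => by
      rw [norm_smul, Real.norm_eq_abs]; exact mul_le_one₀ (hu j) (norm_nonneg _) (hA j)
    refine le_of_eq_of_le ?_ (le_cbNormT hA')
    simp only [tensorOp_apply]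
    congr 1
    refine sum_congr rfl fun i _ => ?_
    rw [List.prod_ofFn_smul (fun s => u (i s)) (fun s => A (i s)), smul_smul, mul_comm]

lemma abs_sum_le_cbNormT (T : (Fin t → Fin n) → ℝ) : |∑ i, T i| ≤ cbNormT T := by
  refine le_of_eq_of_le ?_ (le_cbNormT (A := fun _ => (1 : Mat 1)) fun _ => norm_one.le)
  simp [tensorOp_apply, ← sum_smul, norm_smul]

lemma abs_tEval_le_cbNormT (T : (Fin t → Fin n) → ℝ) {x : Fin n → ℝ} (hx : ∀ j, |x j| ≤ 1) :
    |tEval T x| ≤ cbNormT T := by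
  simp only [tEval, mul_comm (T _)]
  exact (abs_sum_le_cbNormT _).trans (cbNormT_mul_prod_le T hx)

end CbNorm

def boolSign (b : Bool) : ℝ := if b then 1 else -1

lemma abs_boolSign (b : Bool) : |boolSign b| = 1 := by cases b <;> simp [boolSign]

lemma sum_boolSign_pow (k : ℕ) : ∑ b : Bool, boolSign b ^ k = if Even k then 2 else 0 := by
  rcases k.even_or_odd with h | h
  · simp [boolSign, h.neg_one_pow, h, one_add_one_eq_two]
  · simp [boolSign, h.neg_one_pow, Nat.not_even_iff_odd.2 h]

lemma sum_prod_boolSign_pow {ι : Type*} [Fintype ι] [DecidableEq ι] (m : ι → ℕ) :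
    ∑ ε : ι → Bool, ∏ j, boolSign (ε j) ^ m j =
      if ∀ j, Even (m j) then 2 ^ Fintype.card ι else 0 := by
  rw [← Fintype.prod_sum fun j b => boolSign b ^ m j]
  simp only [sum_boolSign_pow, Fintype.prod_ite_zero, prod_const, card_univ]

section TransversalProjection

variable {π : Fin n → Fin t}

def transversalProj (π : Fin n → Fin t) (T : (Fin t → Fin n) → ℝ) : (Fin t → Fin n) → ℝ :=
  fun i => if IsTransversal π i then T i else 0

lemma sum_prod_boolSign_mul_prod_boolSign_comp (i : Fin t → Fin n) :
    ∑ ε : Fin t → Bool, (∏ s, boolSign (ε s)) * ∏ s, boolSign (ε (π (i s))) =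
      if IsTransversal π i then 2 ^ t else 0 := by
  have hfiber : ∀ ε : Fin t → Bool,
      ∏ s, boolSign (ε (π (i s))) = ∏ s', boolSign (ε s') ^ #{s | π (i s) = s'} := fun ε => by
    rw [← prod_fiberwise univ fun s => π (i s)]
    refine prod_congr rfl fun s' _ => ?_
    rw [prod_congr rfl fun s hs => by rw [(mem_filter.1 hs).2], prod_const]
  simp only [hfiber, ← prod_mul_distrib, ← pow_succ']
  rw [sum_prod_boolSign_pow, Fintype.card_fin]
  congr 1
  simp only [isTransversal_iff_forall_odd, Nat.even_add_one, Nat.not_even_iff_odd]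

lemma transversalProj_eq_sum (T : (Fin t → Fin n) → ℝ) :
    transversalProj π T = ∑ ε : Fin t → Bool,
      ((2 ^ t)⁻¹ * ∏ s, boolSign (ε s)) • fun i => (∏ s, boolSign (ε (π (i s)))) * T i := by
  funext i
  simp only [Finset.sum_apply, Pi.smul_apply, smul_eq_mul]
  have hfactor : ∑ ε : Fin t → Bool, (2 ^ t)⁻¹ * (∏ s, boolSign (ε s)) *
      ((∏ s, boolSign (ε (π (i s)))) * T i) = (2 ^ t)⁻¹ *
      (∑ ε : Fin t → Bool, (∏ s, boolSign (ε s)) * ∏ s, boolSign (ε (π (i s)))) * T i := by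
    rw [mul_sum, sum_mul]
    exact sum_congr rfl fun _ _ => by ring
  rw [hfactor, sum_prod_boolSign_mul_prod_boolSign_comp, transversalProj]
  split_ifs <;> simp

lemma cbNormT_transversalProj_le (T : (Fin t → Fin n) → ℝ) :
    cbNormT (transversalProj π T) ≤ cbNormT T := by
  have hcoeff : ∀ ε : Fin t → Bool, |(2 ^ t)⁻¹ * ∏ s, boolSign (ε s)| = (2 ^ t)⁻¹ := fun ε => by
    simp [abs_prod, abs_boolSign]
  rw [transversalProj_eq_sum]
  refine (cbNormT_sum_le _ _).trans ?_
  calc ∑ ε : Fin t → Bool, cbNormT (((2 ^ t)⁻¹ * ∏ s, boolSign (ε s)) •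
          fun i => (∏ s, boolSign (ε (π (i s)))) * T i)
      ≤ ∑ _ε : Fin t → Bool, (2 ^ t)⁻¹ * cbNormT T := sum_le_sum fun ε _ => by
        refine (cbNormT_smul_le _).trans ?_
        rw [hcoeff]
        exact mul_le_mul_of_nonneg_left (cbNormT_mul_prod_le T (u := fun j => boolSign (ε (π j)))
          fun _ => (abs_boolSign _).le)
          (by positivity)
    _ = cbNormT T := by
        rw [sum_const, card_univ, Fintype.card_fun, Fintype.card_bool, Fintype.card_fin,
          nsmul_eq_mul, Nat.cast_pow, Nat.cast_ofNat, mul_inv_cancel_left₀ (by positivity)]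

end TransversalProjection

section WalshCoefficients

variable {σ : Type*} [Fintype σ] [DecidableEq σ] {q : MvPolynomial σ ℝ} {α : σ →₀ ℕ}

lemma two_pow_mul_coeff_eq_sum (hq : ∀ β ∈ q.support, ∀ j, β j ≤ 1) (hα : ∀ j, α j ≤ 1) :
    2 ^ Fintype.card σ * coeff α q =
      ∑ ε : σ → Bool, (∏ j, boolSign (ε j) ^ α j) * eval (fun j => boolSign (ε j)) q := by
  have horth : ∀ β ∈ q.support,
      ∑ ε : σ → Bool, (∏ j, boolSign (ε j) ^ α j) * (coeff β q * ∏ j, boolSign (ε j) ^ β j) =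
        if α = β then 2 ^ Fintype.card σ * coeff α q else 0 := fun β hβ => by
    simp only [mul_left_comm _ (coeff β q), ← mul_sum, ← prod_mul_distrib, ← pow_add,
      sum_prod_boolSign_pow]
    have hparity : (∀ j, Even (α j + β j)) ↔ α = β := by
      refine ⟨fun h => Finsupp.ext fun j => ?_, fun h j => by simp [h]⟩
      have := hα j; have := hq β hβ j; have := Nat.even_iff.1 (h j)
      omega
    by_cases h : α = β
    · simp [h, mul_comm]
    · simp [h, hparity]
  simp only [eval_eq', mul_sum]
  rw [sum_comm, sum_congr rfl horth, sum_ite_eq]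
  split_ifs with hmem
  · rfl
  · rw [notMem_support_iff.1 hmem, mul_zero]

lemma abs_coeff_le_of_abs_eval_boolSign_le (hq : ∀ β ∈ q.support, ∀ j, β j ≤ 1)
    (hα : ∀ j, α j ≤ 1) {M : ℝ} (hM : ∀ ε : σ → Bool, |eval (fun j => boolSign (ε j)) q| ≤ M) :
    |coeff α q| ≤ M := by
  have hpos : (0 : ℝ) < 2 ^ Fintype.card σ := by positivity
  refine le_of_mul_le_mul_left ?_ hpos
  calc 2 ^ Fintype.card σ * |coeff α q| = |2 ^ Fintype.card σ * coeff α q| := by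
        rw [abs_mul, abs_of_pos hpos]
    _ ≤ ∑ ε : σ → Bool, |(∏ j, boolSign (ε j) ^ α j) * eval (fun j => boolSign (ε j)) q| := by
        rw [two_pow_mul_coeff_eq_sum hq hα]
        exact abs_sum_le_sum_abs _ _
    _ ≤ ∑ _ε : σ → Bool, M := sum_le_sum fun ε _ => by
        simpa [abs_mul, abs_prod, abs_pow, abs_boolSign] using hM ε
    _ = 2 ^ Fintype.card σ * M := by simp

end WalshCoefficients

lemma le_mul_csInf {a K : ℝ} {C : Set ℝ} (hC : C.Nonempty) (hK : 0 ≤ K)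
    (h : ∀ c ∈ C, a ≤ K * c) : a ≤ K * sInf C := by
  rcases hK.eq_or_lt with rfl | hK
  · obtain ⟨c, hc⟩ := hC
    simpa using h c hc
  · rw [← div_le_iff₀' hK]
    exact le_csInf hC fun c hc => (div_le_iff₀' hK).2 (h c hc)

section PolyCb

variable {q : MvPolynomial (Fin n) ℝ}

lemma polyCb_le_cbNormT {T : (Fin t → Fin n) → ℝ} (hT : tensorPoly n t T = q) :
    polyCb n t q ≤ cbNormT T :=
  csInf_le ⟨0, by rintro _ ⟨T, _, rfl⟩; exact cbNormT_nonneg T⟩ ⟨T, tEval_eq_eval_iff.2 hT, rfl⟩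

lemma le_mul_polyCb (hq : ∃ T, tensorPoly n t T = q) {a K : ℝ} (hK : 0 ≤ K)
    (h : ∀ T, tensorPoly n t T = q → a ≤ K * cbNormT T) : a ≤ K * polyCb n t q := by
  obtain ⟨T, hT⟩ := hq
  refine le_mul_csInf ⟨_, T, tEval_eq_eval_iff.2 hT, rfl⟩ hK ?_
  rintro _ ⟨T, hT, rfl⟩
  exact h T (tEval_eq_eval_iff.1 hT)

lemma abs_coeff_le_polyCb {π : Fin n → Fin t} (hq : memV π q) {α : Fin n →₀ ℕ}
    (hα : ∀ j, α j ≤ 1) : |coeff α q| ≤ polyCb n t q := by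
  obtain ⟨T₀, hT₀⟩ := exists_tensorPoly_eq fun _ => sum_eq_of_memV hq
  refine le_csInf ⟨_, T₀, tEval_eq_eval_iff.2 hT₀, rfl⟩ ?_
  rintro _ ⟨T, hT, rfl⟩
  refine abs_coeff_le_of_abs_eval_boolSign_le (fun β hβ => (hq β hβ).1) hα fun ε => ?_
  rw [← hT]
  exact abs_tEval_le_cbNormT T fun _ => (abs_boolSign _).le

end PolyCb

section Duality

/-- `sSup (tensorDualSet S)` is the dual cb norm `‖S‖_{cb,*}` on all `t`-tensors. -/
def tensorDualSet (S : (Fin t → Fin n) → ℝ) : Set ℝ :=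
  {c | ∃ T : (Fin t → Fin n) → ℝ, cbNormT T ≤ 1 ∧ c = ∑ i, S i * T i}

/-- `sSup (polyDualSet π p)` is the dual cb norm `‖p‖_{cb,*}` with respect to `V_P`. -/
def polyDualSet (π : Fin n → Fin t) (p : MvPolynomial (Fin n) ℝ) : Set ℝ :=
  {c | ∃ q, memV π q ∧ polyCb n t q ≤ 1 ∧ c = pInner p q}

lemma zero_mem_tensorDualSet (S : (Fin t → Fin n) → ℝ) : 0 ∈ tensorDualSet S :=
  ⟨0, by rw [cbNormT_zero]; exact zero_le_one, by simp⟩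

lemma sSup_tensorDualSet_nonneg {S : (Fin t → Fin n) → ℝ} (hS : BddAbove (tensorDualSet S)) :
    0 ≤ sSup (tensorDualSet S) :=
  le_csSup hS (zero_mem_tensorDualSet S)

lemma inner_le_sSup_tensorDualSet_mul {S : (Fin t → Fin n) → ℝ} (hS : BddAbove (tensorDualSet S))
    (T : (Fin t → Fin n) → ℝ) : ∑ i, S i * T i ≤ sSup (tensorDualSet S) * cbNormT T := by
  rw [← csInf_Ioi (a := cbNormT T)]
  refine le_mul_csInf Set.nonempty_Ioi (sSup_tensorDualSet_nonneg hS) fun r hr => ?_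
  have hr0 : 0 < r := (cbNormT_nonneg T).trans_lt hr
  have hmem : ∑ i, S i * (r⁻¹ • T) i ∈ tensorDualSet S := by
    refine ⟨r⁻¹ • T, (cbNormT_smul_le _).trans ?_, rfl⟩
    rw [abs_of_pos (inv_pos.2 hr0), inv_mul_le_iff₀ hr0, mul_one]
    exact hr.le
  calc ∑ i, S i * T i = r * ∑ i, S i * (r⁻¹ • T) i := by
        simp only [Pi.smul_apply, smul_eq_mul, mul_sum]
        exact sum_congr rfl fun i _ => by field_simp
    _ ≤ sSup (tensorDualSet S) * r := by
        rw [mul_comm]; exact mul_le_mul_of_nonneg_right (le_csSup hS hmem) hr0.le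

variable {π : Fin n → Fin t} {p : MvPolynomial (Fin n) ℝ} {S : (Fin t → Fin n) → ℝ}

lemma polyDualSet_bddAbove (hp : memV π p) : BddAbove (polyDualSet π p) := by
  refine ⟨∑ α ∈ p.support, |coeff α p|, ?_⟩
  rintro _ ⟨q, hq, hcb, rfl⟩
  refine sum_le_sum fun α hα => (le_abs_self _).trans ?_
  rw [abs_mul]
  exact mul_le_of_le_one_right (abs_nonneg _) ((abs_coeff_le_polyCb hq (hp α hα).1).trans hcb)

variable (hp : memV π p) (hsym : ∀ σ, permT S σ = S) (hrep : tensorPoly n t S = p)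
include hp hsym hrep

lemma factorial_mul_mem_polyDualSet {T : (Fin t → Fin n) → ℝ} (hT : cbNormT T ≤ 1) :
    t.factorial * ∑ i, S i * T i ∈ polyDualSet π p := by
  refine ⟨tensorPoly n t (transversalProj π T), memV_tensorPoly fun i hi => ?_,
    (polyCb_le_cbNormT rfl).trans ((cbNormT_transversalProj_le T).trans hT), ?_⟩
  · by_contra h
    exact hi (if_neg h)
  · rw [pInner_tensorPoly_eq_factorial_mul hp hsym hrep]
    congr 1
    refine sum_congr rfl fun i _ => ?_
    by_cases hi : IsTransversal π i
    · rw [transversalProj, if_pos hi]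
    · rw [eq_zero_of_not_isTransversal hp hsym hrep hi, zero_mul, zero_mul]

lemma tensorDualSet_bddAbove : BddAbove (tensorDualSet S) := by
  obtain ⟨B, hB⟩ := polyDualSet_bddAbove hp
  refine ⟨B / t.factorial, ?_⟩
  rintro _ ⟨T, hT, rfl⟩
  rw [le_div_iff₀' (by positivity)]
  exact hB (factorial_mul_mem_polyDualSet hp hsym hrep hT)

lemma pInner_le_mul_polyCb {q : MvPolynomial (Fin n) ℝ} (hq : memV π q) :
    pInner p q ≤ t.factorial * sSup (tensorDualSet S) * polyCb n t q := by
  have hS := tensorDualSet_bddAbove hp hsym hrep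
  refine le_mul_polyCb (exists_tensorPoly_eq fun _ => sum_eq_of_memV hq)
    (mul_nonneg (by positivity) (sSup_tensorDualSet_nonneg hS)) fun T hT => ?_
  rw [← hT, pInner_tensorPoly_eq_factorial_mul hp hsym hrep, mul_assoc]
  exact mul_le_mul_of_nonneg_left (inner_le_sSup_tensorDualSet_mul hS T) (by positivity)

end Duality

theorem dual_cb_norm_eq_factorial_mul_general (n t : ℕ) (π : Fin n → Fin t)
    (p : MvPolynomial (Fin n) ℝ) (hp : memV π p)
    (Tp : (Fin t → Fin n) → ℝ)
    (hsym : ∀ σ : Equiv.Perm (Fin t), permT Tp σ = Tp)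
    (hrep : ∀ x : Fin n → ℝ, tEval Tp x = eval x p) :
    sSup {c : ℝ | ∃ q : MvPolynomial (Fin n) ℝ,
        memV π q ∧ polyCb n t q ≤ 1 ∧ c = pInner p q} =
    (t.factorial : ℝ) *
      sSup {c : ℝ | ∃ T : (Fin t → Fin n) → ℝ,
        cbNormT T ≤ 1 ∧ c = ∑ i : Fin t → Fin n, Tp i * T i} := by
  rw [tEval_eq_eval_iff] at hrep
  change sSup (polyDualSet π p) = t.factorial * sSup (tensorDualSet Tp)
  have hfac : (0 : ℝ) < t.factorial := by positivity
  have hR := tensorDualSet_bddAbove hp hsym hrep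
  have hL_mem : ∀ {T}, cbNormT T ≤ 1 → t.factorial * ∑ i, Tp i * T i ∈ polyDualSet π p :=
    factorial_mul_mem_polyDualSet hp hsym hrep
  refine le_antisymm (csSup_le ⟨_, hL_mem (T := 0) (cbNormT_zero.trans_le zero_le_one)⟩ ?_) ?_
  · rintro _ ⟨q, hq, hcb, rfl⟩
    exact (pInner_le_mul_polyCb hp hsym hrep hq).trans
      (mul_le_of_le_one_right (mul_nonneg hfac.le (sSup_tensorDualSet_nonneg hR)) hcb)
  · rw [← le_div_iff₀' hfac]
    refine csSup_le ⟨0, zero_mem_tensorDualSet Tp⟩ ?_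
    rintro _ ⟨T, hT, rfl⟩
    exact (le_div_iff₀' hfac).2 (le_csSup (polyDualSet_bddAbove hp) (hL_mem hT))

/-- For a partition of `[n]` into `t` parts and `p ∈ V_P` with unique symmetric
representing tensor `T_p`, the dual cb-norm with respect to `V_P` satisfies
`‖p‖_{cb,*} = t! · ‖T_p‖_{cb,*}`. -/
theorem dual_cb_norm_eq_factorial_mul (n t : ℕ) (π : Fin n → Fin t)
    (hπ : Function.Surjective π) (p : MvPolynomial (Fin n) ℝ) (hp : memV π p)
    (Tp : (Fin t → Fin n) → ℝ)
    (hsym : ∀ σ : Equiv.Perm (Fin t), permT Tp σ = Tp)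
    (hrep : ∀ x : Fin n → ℝ, tEval Tp x = eval x p) :
    sSup {c : ℝ | ∃ q : MvPolynomial (Fin n) ℝ,
        memV π q ∧ polyCb n t q ≤ 1 ∧ c = pInner p q} =
    (t.factorial : ℝ) *
      sSup {c : ℝ | ∃ T : (Fin t → Fin n) → ℝ,
        cbNormT T ≤ 1 ∧ c = ∑ i : Fin t → Fin n, Tp i * T i} :=
  dual_cb_norm_eq_factorial_mul_general n t π p hp Tp hsym hrep
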